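/- arXiv:1908.10629 — 5 statements merged into one kernel-verified Lean document; each statement's English description precedes it below -/
import Mathlib

section
/- Let k ≥ 1, n = 2^k - 1, and let S ⊆ {0,1}^n be the cocycle space of PG(k-1,2). Then the point (1/2, ..., 1/2) ∈ R^n lies in the interior of conv(S); moreover (1/2)·1 = Σ_{p∈S} (1/(n+1))·p, and this is the unique way to write (1/2)·1 as a convex combination of the points of S. -/
/-!
The characters `χ_y(a) = (-1)^(y ⬝ᵥ a)` of `GF(2)^k` are the affine images `1 - 2 p_y` of the
cocycle points `p_y`, extended by `χ_y(0) = 1`. So an affine dependence `∑ w_y p_y = 0`,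
`∑ w_y = 0` among the cocycle points is a linear dependence among the characters, which are
linearly independent: the `2^k = n + 1` points form an affine basis of `ℝ^n`.
Orthogonality, `∑_y χ_y(a) = 0` for `a ≠ 0`, shows that every barycentric coordinate of `(1/2)·𝟏`
equals `2^{-k}`; positivity of these coordinates puts `(1/2)·𝟏` in the interior of the simplex,
and uniqueness of barycentric coordinates gives the uniqueness of the convex combination.
-/

open Matrix

/-- The point of the cocycle space of `PG(k-1,2)` corresponding to `y ∈ GF(2)^k`, viewed as a
real vector whose coordinates are indexed by the nonzero vectors of `GF(2)^k`. -/
noncomputable def cocyclePoint (k : ℕ) (y : Fin k → ZMod 2) :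
    {a : Fin k → ZMod 2 // a ≠ 0} → ℝ :=
  fun a => ((dotProduct y a.val).val : ℝ)

open Finset

namespace ZMod

lemma neg_one_pow_val_add {R : Type*} [Ring R] (u v : ZMod 2) :
    (-1 : R) ^ (u + v).val = (-1) ^ u.val * (-1) ^ v.val := by
  rw [val_add, ← neg_one_pow_eq_pow_mod_two, pow_add]

lemma neg_one_pow_val {R : Type*} [Ring R] (u : ZMod 2) :
    (-1 : R) ^ u.val = 1 - 2 * (u.val : R) := by
  have := u.val_lt
  interval_cases u.val <;> norm_num

end ZMod

section signChar

variable {ι : Type*} [Fintype ι] {R : Type*} [CommRing R]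

variable (R) in
def signChar (y : ι → ZMod 2) : AddChar (ι → ZMod 2) R where
  toFun a := (-1) ^ (y ⬝ᵥ a).val
  map_zero_eq_one' := by simp
  map_add_eq_mul' a b := by rw [dotProduct_add, ZMod.neg_one_pow_val_add]

lemma signChar_apply (y a : ι → ZMod 2) : signChar R y a = (-1) ^ (y ⬝ᵥ a).val := rfl

lemma signChar_comm (y a : ι → ZMod 2) : signChar R y a = signChar R a y := by
  rw [signChar_apply, signChar_apply, dotProduct_comm]

lemma signChar_zero : signChar R (0 : ι → ZMod 2) = 0 := by
  ext a
  simp [signChar_apply]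

lemma signChar_injective [DecidableEq ι] [CharZero R] :
    Function.Injective (signChar R : (ι → ZMod 2) → AddChar (ι → ZMod 2) R) := by
  intro y y' h
  funext i
  have hi := DFunLike.congr_fun h (Pi.single i 1)
  simp only [signChar_apply, dotProduct_single, mul_one, ZMod.neg_one_pow_val] at hi
  have : 2 * (y i).val = 2 * (y' i).val := by exact_mod_cast sub_right_injective hi
  exact ZMod.val_injective _ (by omega)

lemma sum_signChar_eq_zero [DecidableEq ι] [IsDomain R] [CharZero R] {a : ι → ZMod 2}
    (ha : a ≠ 0) :
    ∑ y, signChar R y a = 0 := by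
  simp_rw [signChar_comm _ a]
  have hχ : signChar R a ≠ 0 := by
    rw [← signChar_zero]
    exact signChar_injective.ne ha
  exact AddChar.sum_eq_zero_iff_ne_zero.2 hχ

lemma linearIndependent_signChar [DecidableEq ι] {R : Type*} [RCLike R] :
    LinearIndependent R (fun y : ι → ZMod 2 ↦ ⇑(signChar R y)) :=
  (AddChar.linearIndependent (ι → ZMod 2) R).comp _ signChar_injective

end signChar

lemma AffineBasis.coord_sum_smul {ι k V : Type*} [Fintype ι] [Ring k] [AddCommGroup V]
    [Module k V] (b : AffineBasis ι k V) {w : ι → k} (hw : ∑ i, w i = 1) (i : ι) :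
    b.coord i (∑ j, w j • b j) = w i := by
  rw [← univ.affineCombination_eq_linear_combination _ _ hw,
    b.coord_apply_combination_of_mem (mem_univ i) hw]

lemma signChar_eq_one_sub_two_mul_cocyclePoint (k : ℕ) (y : Fin k → ZMod 2)
    (a : {a : Fin k → ZMod 2 // a ≠ 0}) :
    signChar ℝ y a = 1 - 2 * cocyclePoint k y a :=
  ZMod.neg_one_pow_val _

theorem sum_smul_cocyclePoint (k : ℕ) :
    ∑ y : Fin k → ZMod 2, (1 / (2 ^ k : ℝ)) • cocyclePoint k y = fun _ ↦ 1 / 2 := by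
  funext a
  have hχ := sum_signChar_eq_zero (R := ℝ) a.prop
  simp only [signChar_eq_one_sub_two_mul_cocyclePoint, sum_sub_distrib, ← mul_sum, sum_const,
    card_univ, Fintype.card_fun, ZMod.card, Fintype.card_fin, nsmul_eq_mul, mul_one] at hχ
  simp only [Finset.sum_apply, Pi.smul_apply, smul_eq_mul, ← mul_sum]
  field_simp
  push_cast at hχ
  linarith

theorem affineIndependent_cocyclePoint (k : ℕ) : AffineIndependent ℝ (cocyclePoint k) := by
  rw [affineIndependent_iff_of_fintype]
  intro w hw hwp
  rw [univ.weightedVSub_eq_linear_combination hw] at hwp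
  refine Fintype.linearIndependent_iff.1 (linearIndependent_signChar (ι := Fin k) (R := ℝ)) w ?_
  funext a
  simp only [Finset.sum_apply, Pi.smul_apply, smul_eq_mul, Pi.zero_apply]
  by_cases ha : a = 0
  · simpa [ha, signChar_apply] using hw
  · have hwa := congrFun hwp ⟨a, ha⟩
    simp only [Finset.sum_apply, Pi.smul_apply, smul_eq_mul, Pi.zero_apply] at hwa
    simp only [signChar_eq_one_sub_two_mul_cocyclePoint k _ ⟨a, ha⟩, mul_sub, mul_one,
      sum_sub_distrib, hw, mul_left_comm _ (2 : ℝ), ← mul_sum, hwa]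
    ring

noncomputable def cocycleAffineBasis (k : ℕ) :
    AffineBasis (Fin k → ZMod 2) ℝ ({a : Fin k → ZMod 2 // a ≠ 0} → ℝ) where
  toFun := cocyclePoint k
  ind' := affineIndependent_cocyclePoint k
  tot' := by
    rw [(affineIndependent_cocyclePoint k).affineSpan_eq_top_iff_card_eq_finrank_add_one,
      Module.finrank_fintype_fun_eq_card, Fintype.card_subtype_compl, Fintype.card_subtype_eq]
    simp only [Fintype.card_fun, ZMod.card, Fintype.card_fin]
    have := Nat.one_le_two_pow (n := k)
    omega

lemma coe_cocycleAffineBasis (k : ℕ) : ⇑(cocycleAffineBasis k) = cocyclePoint k := rfl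

theorem PG_cocycle_space_center_general (k : ℕ) :
    (fun _ : {a : Fin k → ZMod 2 // a ≠ 0} => (1 / 2 : ℝ)) ∈
        interior (convexHull ℝ (Set.range (cocyclePoint k))) ∧
    (∑ y : Fin k → ZMod 2, (1 / (2 ^ k : ℝ)) • cocyclePoint k y) =
        (fun _ => (1 / 2 : ℝ)) ∧
    (∀ α : (Fin k → ZMod 2) → ℝ, (∀ y, 0 ≤ α y) → (∑ y, α y) = 1 →
      (∑ y, α y • cocyclePoint k y) = (fun _ => (1 / 2 : ℝ)) →
      ∀ y, α y = 1 / (2 ^ k : ℝ)) := by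
  set b := cocycleAffineBasis k
  have hcoord (y : Fin k → ZMod 2) : b.coord y (fun _ ↦ 1 / 2) = 1 / 2 ^ k := by
    have hw : ∑ _y : Fin k → ZMod 2, (1 / (2 ^ k : ℝ)) = 1 := by simp
    rw [← sum_smul_cocyclePoint, ← coe_cocycleAffineBasis, b.coord_sum_smul hw]
  refine ⟨?_, sum_smul_cocyclePoint k, fun α _ hα hαp y ↦ ?_⟩
  · rw [← coe_cocycleAffineBasis, b.interior_convexHull]
    intro y
    rw [hcoord]
    positivity
  · rw [← hcoord y, ← hαp, ← coe_cocycleAffineBasis, b.coord_sum_smul hα]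

/-- For `k ≥ 1`, `n = 2^k - 1` and `S` the cocycle space of `PG(k-1,2)` in `ℝ^n`:
the point `(1/2)·𝟏` lies in the interior of `conv(S)`; moreover
`(1/2)·𝟏 = Σ_{p ∈ S} (1/(n+1))·p`, and this is the unique way of writing `(1/2)·𝟏` as a
convex combination of the points of `S`. (The `2^k = n + 1` points of `S` are indexed by
`y ∈ GF(2)^k`.) -/
theorem PG_cocycle_space_center (k : ℕ) (hk : 1 ≤ k) :
    (fun _ : {a : Fin k → ZMod 2 // a ≠ 0} => (1 / 2 : ℝ)) ∈
        interior (convexHull ℝ (Set.range (cocyclePoint k))) ∧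
    (∑ y : Fin k → ZMod 2, (1 / (2 ^ k : ℝ)) • cocyclePoint k y) =
        (fun _ => (1 / 2 : ℝ)) ∧
    (∀ α : (Fin k → ZMod 2) → ℝ, (∀ y, 0 ≤ α y) → (∑ y, α y) = 1 →
      (∑ y, α y • cocyclePoint k y) = (fun _ => (1 / 2 : ℝ)) →
      ∀ y, α y = 1 / (2 ^ k : ℝ)) :=
  PG_cocycle_space_center_general k
end

section
/- Let k ≥ 1, n = 2^k - 1, and let S be the cocycle space of PG(k-1,2) viewed in R^n. For each p ∈ S, the inequality Σ_{i : p_i = 0} x_i + Σ_{j : p_j = 1} (1 - x_j) ≤ (n+1)/2 is valid for all points of S, and every point of S other than p satisfies it with equality. -/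
open Matrix Finset

/-!
The left-hand side is the Hamming distance between the codewords `a ↦ zᵀa` and `a ↦ yᵀa` of
the simplex code. For `z ≠ y` their difference is the codeword of `w = z - y ≠ 0`, and `a ↦ wᵀa`
is a nonzero additive map onto `ZMod 2`, so its two fibres have equal size: exactly half of
the `2^k` vectors `a` satisfy `wᵀa ≠ 0`, and `a = 0` is never one of them.
-/

theorem ZMod.two_eq_zero_or_eq_one (x : ZMod 2) : x = 0 ∨ x = 1 := by decide +revert

theorem ZMod.two_ne_zero_iff_eq_one {x : ZMod 2} : x ≠ 0 ↔ x = 1 := by decide +revert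

theorem AddMonoidHom.two_mul_card_fiber_one {G : Type*} [AddGroup G] [Fintype G]
    (f : G →+ ZMod 2) (hf : f ≠ 0) : 2 * #{g | f g = 1} = Fintype.card G := by
  have hone : (1 : ZMod 2) ∈ Set.range f := by
    obtain ⟨g, hg⟩ := DFunLike.ne_iff.mp hf
    exact ⟨g, ZMod.two_ne_zero_iff_eq_one.mp hg⟩
  have hzero : (0 : ZMod 2) ∈ Set.range f := ⟨0, map_zero f⟩
  have hcompl : #{g | ¬ f g = 1} = #{g | f g = 0} := by
    simp_rw [← ZMod.two_ne_zero_iff_eq_one, not_not]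
  rw [← card_univ, ← card_filter_add_card_filter_not (s := univ) (fun g => f g = 1), hcompl,
    card_fiber_eq_of_mem_range f hzero hone, two_mul]

theorem two_mul_card_dotProduct_ne_zero {ι : Type*} [Fintype ι] [DecidableEq ι]
    {w : ι → ZMod 2} (hw : w ≠ 0) : 2 * #{a | w ⬝ᵥ a ≠ 0} = 2 ^ Fintype.card ι := by
  let f : (ι → ZMod 2) →+ ZMod 2 := AddMonoidHom.mk' (w ⬝ᵥ ·) (dotProduct_add w)
  have hf : f ≠ 0 := by
    obtain ⟨i, hi⟩ := Function.ne_iff.mp hw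
    exact DFunLike.ne_iff.mpr ⟨Pi.single i 1, by simpa [f, dotProduct_single_one] using hi⟩
  simp_rw [ZMod.two_ne_zero_iff_eq_one]
  have hcard := f.two_mul_card_fiber_one hf
  rwa [Fintype.card_fun, ZMod.card] at hcard

theorem hammingDist_simplexCode {k : ℕ} (z y : Fin k → ZMod 2) :
    hammingDist (fun a : {a : Fin k → ZMod 2 // a ≠ 0} => z ⬝ᵥ a.val) (fun a => y ⬝ᵥ a.val)
      = #{a | (z - y) ⬝ᵥ a ≠ 0} := by
  rw [hammingDist]
  calc #{a : {a : Fin k → ZMod 2 // a ≠ 0} | z ⬝ᵥ a.val ≠ y ⬝ᵥ a.val}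
      = #(({a | (z - y) ⬝ᵥ a ≠ 0} : Finset _).subtype (· ≠ 0)) := by
        congr 1; ext a; simp [sub_dotProduct, sub_eq_zero]
    _ = #{a | (z - y) ⬝ᵥ a ≠ 0} := by
        rw [card_subtype, filter_true_of_mem]
        intro a ha h0
        simp [h0] at ha

theorem two_mul_hammingDist_simplexCode {k : ℕ} {z y : Fin k → ZMod 2} (h : z ≠ y) :
    2 * hammingDist (fun a : {a : Fin k → ZMod 2 // a ≠ 0} => z ⬝ᵥ a.val) (fun a => y ⬝ᵥ a.val)
      = 2 ^ k := by
  rw [hammingDist_simplexCode, two_mul_card_dotProduct_ne_zero (sub_ne_zero.mpr h),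
    Fintype.card_fin]

theorem sum_filter_add_sum_filter_eq_hammingDist {ι : Type*} [Fintype ι] (p q : ι → ZMod 2) :
    (∑ a ∈ univ.filter (fun a => p a = 0), ((q a).val : ℝ)) +
      ∑ a ∈ univ.filter (fun a => p a = 1), (1 - ((q a).val : ℝ)) = hammingDist p q := by
  rw [sum_filter, sum_filter, ← sum_add_distrib, hammingDist, card_filter, Nat.cast_sum]
  refine sum_congr rfl fun a _ => ?_
  obtain h | h := (p a).two_eq_zero_or_eq_one <;> obtain h' | h' := (q a).two_eq_zero_or_eq_one <;>
    simp [h, h', -ZMod.natCast_val, ZMod.val_one]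

theorem PG_cocycle_facets_general (k : ℕ) (z y : Fin k → ZMod 2) :
    ((∑ a ∈ Finset.univ.filter
        (fun a : {a : Fin k → ZMod 2 // a ≠ 0} => dotProduct z a.val = 0),
        ((dotProduct y a.val).val : ℝ)) +
      ∑ a ∈ Finset.univ.filter
        (fun a : {a : Fin k → ZMod 2 // a ≠ 0} => dotProduct z a.val = 1),
        (1 - ((dotProduct y a.val).val : ℝ)) ≤ (2 ^ k : ℝ) / 2) ∧
    (y ≠ z →
      (∑ a ∈ Finset.univ.filter
        (fun a : {a : Fin k → ZMod 2 // a ≠ 0} => dotProduct z a.val = 0),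
        ((dotProduct y a.val).val : ℝ)) +
      ∑ a ∈ Finset.univ.filter
        (fun a : {a : Fin k → ZMod 2 // a ≠ 0} => dotProduct z a.val = 1),
        (1 - ((dotProduct y a.val).val : ℝ)) = (2 ^ k : ℝ) / 2) := by
  rw [sum_filter_add_sum_filter_eq_hammingDist
    (fun a : {a : Fin k → ZMod 2 // a ≠ 0} => z ⬝ᵥ a.val) (fun a => y ⬝ᵥ a.val)]
  rcases eq_or_ne y z with rfl | hyz
  · simp only [hammingDist_self, Nat.cast_zero, ne_eq, not_true_eq_false, IsEmpty.forall_iff,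
      and_true]
    positivity
  · have hdist : (hammingDist (fun a : {a : Fin k → ZMod 2 // a ≠ 0} => z ⬝ᵥ a.val)
        (fun a => y ⬝ᵥ a.val) : ℝ) = 2 ^ k / 2 := by
      rw [eq_div_iff two_ne_zero, mul_comm]
      exact_mod_cast two_mul_hammingDist_simplexCode hyz.symm
    exact ⟨hdist.le, fun _ => hdist⟩

/-- Let `k ≥ 1`, `n = 2^k - 1`, and let `S` be the cocycle space of `PG(k-1,2)`
viewed in `ℝ^n` (points indexed by `z ∈ GF(2)^k`, coordinates indexed by the nonzero vectors
`a ∈ GF(2)^k`, the coordinate at `a` of the point of `z` being `zᵀa`). For each point `p`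
of `S` (corresponding to `z`), the inequality
`Σ_{a : p_a = 0} x_a + Σ_{a : p_a = 1} (1 - x_a) ≤ (n+1)/2`
holds for every point `x` of `S` (corresponding to `y`), with equality whenever `x ≠ p`. -/
theorem PG_cocycle_facets (k : ℕ) (hk : 1 ≤ k) (z y : Fin k → ZMod 2) :
    ((∑ a ∈ Finset.univ.filter
        (fun a : {a : Fin k → ZMod 2 // a ≠ 0} => dotProduct z a.val = 0),
        ((dotProduct y a.val).val : ℝ)) +
      ∑ a ∈ Finset.univ.filter
        (fun a : {a : Fin k → ZMod 2 // a ≠ 0} => dotProduct z a.val = 1),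
        (1 - ((dotProduct y a.val).val : ℝ)) ≤ (2 ^ k : ℝ) / 2) ∧
    (y ≠ z →
      (∑ a ∈ Finset.univ.filter
        (fun a : {a : Fin k → ZMod 2 // a ≠ 0} => dotProduct z a.val = 0),
        ((dotProduct y a.val).val : ℝ)) +
      ∑ a ∈ Finset.univ.filter
        (fun a : {a : Fin k → ZMod 2 // a ≠ 0} => dotProduct z a.val = 1),
        (1 - ((dotProduct y a.val).val : ℝ)) = (2 ^ k : ℝ) / 2) :=
  PG_cocycle_facets_general k z y
end

section
/- Let G = (V, E) be a connected bipartite graph with bipartition {U, U'}, both parts nonempty, and let X ⊆ U' with 2 ≤ |X| ≤ 3. Suppose no proper vertex-induced subgraph of G is connected and contains X. Then G is a tree and every leaf of G belongs to X. -/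
/-! By minimality, every vertex whose deletion leaves `G` connected lies in `X`; leaves are such
vertices. On the other hand, each vertex `v` of a cycle of a finite connected graph either is such
a vertex itself or cuts off a part of the graph away from the cycle, whose vertex farthest from
`v` is one; so a cycle is no longer than the number of these vertices, which is at most `3`. A
cycle of a bipartite graph has even length, hence length at least `4`. -/

namespace SimpleGraph

variable {V : Type*} {G : SimpleGraph V}

def Separates (G : SimpleGraph V) (v w : V) (s : Finset V) : Prop :=
  ∀ x ∈ s, ∀ p : G.Walk w x, v ∈ p.support

lemma separates_self (v : V) (s : Finset V) : G.Separates v v s :=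
  fun _ _ p => p.start_mem_support

lemma connected_induce_compl_singleton_of_forall_walk {v w : V} (hvw : v ≠ w)
    (h : ∀ u, u ≠ w → ∃ p : G.Walk u v, w ∉ p.support) : (G.induce {w}ᶜ).Connected := by
  rw [connected_iff_exists_forall_reachable]
  refine ⟨⟨v, hvw⟩, fun ⟨u, hu⟩ => ?_⟩
  obtain ⟨p, hp⟩ := h u hu
  exact ⟨(p.induce {w}ᶜ fun x hx hxw => hp (hxw ▸ hx)).reverse⟩

/-- A vertex of `s` separating `w` from `s` is the first vertex of `s` on any walk from `w`. -/
lemma Separates.eq [DecidableEq V] (hG : G.Preconnected) {s : Finset V} {v₁ v₂ w : V}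
    (hv₁ : v₁ ∈ s) (hv₂ : v₂ ∈ s) (h₁ : G.Separates v₁ w s) (h₂ : G.Separates v₂ w s) :
    v₁ = v₂ := by
  obtain ⟨p⟩ := hG w v₁
  obtain ⟨x, hx, _, hfirst⟩ :=
    p.exists_mem_support_forall_mem_support_imp_eq s ⟨v₁, by simp [hv₁]⟩
  exact (hfirst v₁ hv₁ (h₁ x hx _)).trans (hfirst v₂ hv₂ (h₂ x hx _)).symm

lemma Walk.IsCycle.exists_walk_snd_notMem_support {v x : V} {c : G.Walk v v} (hc : c.IsCycle)
    (hx : x ∈ c.support) (hxv : x ≠ v) : ∃ p : G.Walk x c.snd, v ∉ p.support := by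
  classical
  cases c with
  | nil => exact absurd hc Walk.not_isCycle_nil
  | cons h q =>
    have hq : q.IsPath := ((Walk.cons_isCycle_iff q h).mp hc).1
    have hxq : x ∈ q.support := by simpa [hxv] using hx
    rw [Walk.snd_cons]
    exact ⟨(q.takeUntil x hxq).reverse, by
      simpa using Walk.endpoint_notMem_support_takeUntil hq hxq hxv.symm⟩

/-- A vertex separated from `s` by `v` and farthest from `v` among such vertices is not a cut
vertex: a shortest path from any other vertex to `v` that met it would lead to a vertex that
is also separated from `s` by `v`, but farther from `v`. -/
lemma Connected.connected_induce_compl_singleton_of_separates (hG : G.Connected)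
    {s : Finset V} {v w : V} (hw : G.Separates v w s) (hwv : w ≠ v)
    (hmax : ∀ u, G.Separates v u s → G.dist u v ≤ G.dist w v) :
    (G.induce {w}ᶜ).Connected := by
  classical
  refine connected_induce_compl_singleton_of_forall_walk hwv.symm fun u huw => ?_
  obtain ⟨p, hp, hlen⟩ := hG.exists_path_of_dist u v
  by_cases hwp : w ∈ p.support
  swap
  · exact ⟨p, hwp⟩
  have hvp : v ∉ (p.takeUntil w hwp).support :=
    Walk.endpoint_notMem_support_takeUntil hp hwp hwv.symm
  have hu : G.Separates v u s := fun x hx q => by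
    simpa [Walk.mem_support_append_iff, hvp] using
      hw x hx ((p.takeUntil w hwp).reverse.append q)
  have hdrop : G.dist w v ≤ (p.dropUntil w hwp).length := dist_le _
  have hlt := Walk.length_dropUntil_lt_length hwp (Ne.symm huw)
  have := hmax u hu
  omega

lemma Walk.IsCycle.exists_separates_connected_induce_compl_singleton [Finite V]
    [DecidableEq V] (hG : G.Connected) {a v : V} {c : G.Walk a a} (hc : c.IsCycle)
    (hv : v ∈ c.support) :
    ∃ w, G.Separates v w c.support.toFinset ∧ (G.induce {w}ᶜ).Connected := by
  set s := c.support.toFinset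
  obtain ⟨w, hw, hmax⟩ := Set.exists_max_image {u | G.Separates v u s} (G.dist · v)
    (Set.toFinite _) ⟨v, separates_self v s⟩
  refine ⟨w, hw, ?_⟩
  by_cases hwv : w = v
  swap
  · exact hG.connected_induce_compl_singleton_of_separates hw hwv hmax
  rw [hwv, dist_self] at hmax
  rw [hwv]
  have hc' := hc.rotate hv
  refine connected_induce_compl_singleton_of_forall_walk
    ((c.rotate v hv).adj_snd hc'.not_nil).ne.symm fun u huv => ?_
  have hu : ¬ G.Separates v u s := fun hu =>
    huv ((hG u v).dist_eq_zero_iff.mp (Nat.le_zero.mp (hmax u hu)))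
  simp only [Separates, not_forall] at hu
  obtain ⟨x, hx, p, hvp⟩ := hu
  have hxv : x ≠ v := fun h => hvp (h ▸ p.end_mem_support)
  obtain ⟨q, hvq⟩ := hc'.exists_walk_snd_notMem_support
    ((c.mem_support_rotate_iff v hv).mpr (List.mem_toFinset.mp hx)) hxv
  exact ⟨p.append q, by simp [Walk.mem_support_append_iff, hvp, hvq]⟩

lemma Walk.IsCycle.card_support_toFinset [DecidableEq V] {a : V} {c : G.Walk a a}
    (hc : c.IsCycle) : c.support.toFinset.card = c.length := by
  rw [← c.cons_tail_support, List.toFinset_cons,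
    Finset.insert_eq_of_mem (List.mem_toFinset.mpr (c.end_mem_tail_support hc.not_nil)),
    List.toFinset_card_of_nodup hc.support_nodup, List.length_tail, Walk.length_support]
  rfl

/-- Each vertex of the cycle separates from the cycle some vertex that is not a cut vertex, and
distinct vertices of the cycle cannot separate the same vertex from it. -/
theorem Walk.IsCycle.length_le_card [Finite V] [DecidableEq V] (hG : G.Connected) {a : V}
    {c : G.Walk a a} (hc : c.IsCycle) {X : Finset V}
    (hX : ∀ v, (G.induce {v}ᶜ).Connected → v ∈ X) : c.length ≤ X.card := by
  choose! f hf using fun v (hv : v ∈ c.support.toFinset) =>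
    hc.exists_separates_connected_induce_compl_singleton hG (List.mem_toFinset.mp hv)
  rw [← hc.card_support_toFinset]
  refine Finset.card_le_card_of_injOn f (fun v hv => hX _ (hf v hv).2) fun v₁ hv₁ v₂ hv₂ h => ?_
  exact Separates.eq hG.preconnected hv₁ hv₂ (hf v₁ hv₁).1 (h ▸ (hf v₂ hv₂).1)

end SimpleGraph

theorem tree_of_minimal_connected_induced_general {V : Type} [Fintype V]
    (G : SimpleGraph V) [DecidableRel G.Adj]
    (hconn : G.Connected)
    (U : Set V)
    (hbip : ∀ v w : V, G.Adj v w → (v ∈ U ↔ w ∉ U))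
    (X : Finset V)
    (hX3 : X.card ≤ 3)
    (hmin : ∀ W : Set V, W ≠ Set.univ → (↑X : Set V) ⊆ W → ¬ (G.induce W).Connected) :
    G.IsTree ∧ ∀ v : V, G.degree v = 1 → v ∈ X := by
  classical
  have hX : ∀ v, (G.induce {v}ᶜ).Connected → v ∈ X := fun v hv => by
    by_contra hvX
    exact hmin {v}ᶜ (Set.compl_ne_univ.mpr (Set.singleton_nonempty v))
      (Set.subset_compl_singleton_iff.mpr (by simpa using hvX)) hv
  refine ⟨⟨hconn, fun a c hc => ?_⟩,
    fun v hv => hX v (hconn.induce_compl_singleton_of_degree_eq_one hv)⟩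
  let bicoloring : G.Coloring Bool :=
    SimpleGraph.Coloring.mk (fun v => decide (v ∈ U)) fun {v w} h => by simp [hbip v w h]
  obtain ⟨k, hk⟩ := (bicoloring.even_length_iff_congr c).mpr Iff.rfl
  have := hc.three_le_length
  have := hc.length_le_card hconn hX
  omega

/-- Let `G` be a connected bipartite graph with bipartition `{U, Uᶜ}`, both parts
nonempty, and let `X ⊆ Uᶜ` with `2 ≤ |X| ≤ 3`. Suppose no proper vertex-induced subgraph of
`G` is connected and contains `X`. Then `G` is a tree and every leaf (vertex of degree one)
of `G` belongs to `X`. -/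
theorem tree_of_minimal_connected_induced {V : Type} [Fintype V] [DecidableEq V]
    (G : SimpleGraph V) [DecidableRel G.Adj]
    (hconn : G.Connected)
    (U : Set V) (hU : U.Nonempty) (hU' : Uᶜ.Nonempty)
    (hbip : ∀ v w : V, G.Adj v w → (v ∈ U ↔ w ∉ U))
    (X : Finset V) (hXU : ∀ x ∈ X, x ∈ Uᶜ)
    (hX2 : 2 ≤ X.card) (hX3 : X.card ≤ 3)
    (hmin : ∀ W : Set V, W ≠ Set.univ → (↑X : Set V) ⊆ W → ¬ (G.induce W).Connected) :
    G.IsTree ∧ ∀ v : V, G.degree v = 1 → v ∈ X :=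
  tree_of_minimal_connected_induced_general G hconn U hbip X hX3 hmin
end

section
/- A set S ⊆ {0,1}^n is an affine binary space (i.e., a △ b △ c ∈ S for all a, b, c ∈ S) if and only if cuboid(S) is a binary clutter, i.e., for any three members C₁, C₂, C₃ of cuboid(S), the symmetric difference C₁ △ C₂ △ C₃ contains a member of cuboid(S). -/
/-! Coordinatewise, the symmetric difference of the members of `a`, `b`, `c` is the member of
`a + b + c`; and a member lies inside another only if they are equal, since each member has
exactly one element above every coordinate. -/

/-- The member of `cuboid(S)` corresponding to a point `p ∈ {0,1}^n`. The ground set of the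
cuboid is `Fin n × ZMod 2`, where `(i, 1)` plays the role of coordinate `2i - 1` ("`x_i`")
and `(i, 0)` the role of coordinate `2i` ("`1 - x_i`"); the member of `p` has incidence
vector `(p_1, 1 - p_1, …, p_n, 1 - p_n)`. -/
def cuboidMember {n : ℕ} (p : Fin n → ZMod 2) : Finset (Fin n × ZMod 2) :=
  Finset.univ.filter (fun e => p e.1 = e.2)

section

variable {n : ℕ}

theorem mem_cuboidMember {p : Fin n → ZMod 2} {e : Fin n × ZMod 2} :
    e ∈ cuboidMember p ↔ p e.1 = e.2 := by
  simp [cuboidMember]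

theorem cuboidMember_add_add (a b c : Fin n → ZMod 2) :
    cuboidMember (a + b + c) =
      symmDiff (symmDiff (cuboidMember a) (cuboidMember b)) (cuboidMember c) := by
  have parity : ∀ x y z w : ZMod 2,
      x + y + z = w ↔ Xor (Xor (x = w) (y = w)) (z = w) := by
    unfold Xor; decide
  ext ⟨i, w⟩
  simp only [Finset.mem_symmDiff, mem_cuboidMember, Pi.add_apply]
  exact parity (a i) (b i) (c i) w

theorem cuboidMember_subset_cuboidMember_iff {p q : Fin n → ZMod 2} :
    cuboidMember p ⊆ cuboidMember q ↔ p = q := by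
  refine ⟨fun h => funext fun i => ?_, fun h => h ▸ subset_rfl⟩
  exact (mem_cuboidMember.1 (h (mem_cuboidMember (e := (i, p i)) |>.2 rfl))).symm

end

/-- A set `S ⊆ {0,1}^n` is an affine binary space (`a △ b △ c ∈ S` for all
`a, b, c ∈ S`) if and only if `cuboid(S)` is a binary clutter, i.e. for any three members,
their symmetric difference contains a member. -/
theorem affine_binary_space_iff_cuboid_binary (n : ℕ) (S : Set (Fin n → ZMod 2)) :
    (∀ a ∈ S, ∀ b ∈ S, ∀ c ∈ S, a + b + c ∈ S) ↔
    (∀ a ∈ S, ∀ b ∈ S, ∀ c ∈ S, ∃ d ∈ S,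
      cuboidMember d ⊆ symmDiff (symmDiff (cuboidMember a) (cuboidMember b)) (cuboidMember c)) := by
  simp_rw [← cuboidMember_add_add, cuboidMember_subset_cuboidMember_iff, exists_eq_right]
end

section
/- A clutter C is binary (the symmetric difference of any three members contains a member) if and only if |C ∩ B| is odd for every member C ∈ C and every minimal cover B ∈ b(C). -/
/-!
Induct on the support of the clutter. Contracting an element `u ∉ B` keeps `B` a minimal cover,
and deleting an element `u ∈ B \ C` turns `B` into the minimal cover `B \ {u}`; neither changes
`|B ∩ C|`, so only the case `B = C` is left. If `|C|` were even, `C` could not survive the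
contraction of any `u ∉ C`, so some member `K_u` has `K_u \ C = {u}`. Binarity makes `K_u` unique,
and a parity count makes the traces `K_u ∩ C` a chain, so one point `x ∈ C` lies in all of them.
Replacing a member `Y ∌ x` by a member of `C ∆ Y ∆ K_u` for some `u ∈ Y \ C` then descends on
`|Y \ C|` until it reaches `C ∋ x`; hence `{x}` is a cover and `C = {x}` is odd after all.
-/

open Finset
open scoped symmDiff

namespace SetFamily

variable {V : Type}

def IsClutter (𝒞 : Finset (Finset V)) : Prop :=
  ∀ C ∈ 𝒞, ∀ C' ∈ 𝒞, C ⊆ C' → C = C'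

variable [DecidableEq V]

def IsBinary (𝒞 : Finset (Finset V)) : Prop :=
  ∀ C₁ ∈ 𝒞, ∀ C₂ ∈ 𝒞, ∀ C₃ ∈ 𝒞, ∃ C ∈ 𝒞, C ⊆ C₁ ∆ C₂ ∆ C₃

def IsCover (𝒞 : Finset (Finset V)) (B : Finset V) : Prop :=
  ∀ C ∈ 𝒞, (B ∩ C).Nonempty

def IsMinCover (𝒞 : Finset (Finset V)) (B : Finset V) : Prop :=
  IsCover 𝒞 B ∧ ∀ B' ⊂ B, ¬ IsCover 𝒞 B'

def deletion (𝒞 : Finset (Finset V)) (u : V) : Finset (Finset V) :=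
  𝒞.filter (u ∉ ·)

open Classical in
noncomputable def contraction (𝒞 : Finset (Finset V)) (u : V) : Finset (Finset V) :=
  (𝒞.image (·.erase u)).filter (Minimal (· ∈ 𝒞.image (·.erase u)))

theorem card_symmDiff_add_two_mul_card_inter (s t : Finset V) :
    #(s ∆ t) + 2 * #(s ∩ t) = #s + #t := by
  rw [symmDiff_eq_sup_sdiff_inf, sup_eq_union, inf_eq_inter,
    card_sdiff_of_subset inter_subset_union]
  have := card_union_add_card_inter s t
  have := card_le_card (inter_subset_union (s := s) (t := t))
  omega

theorem odd_card_symmDiff_symmDiff {s t u : Finset V} (hs : Odd #s) (ht : Odd #t)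
    (hu : Odd #u) : Odd #(s ∆ t ∆ u) := by
  have := card_symmDiff_add_two_mul_card_inter s t
  have := card_symmDiff_add_two_mul_card_inter (s ∆ t) u
  rw [Nat.odd_iff] at *
  omega

theorem inter_symmDiff_symmDiff (B s t u : Finset V) :
    B ∩ (s ∆ t ∆ u) = (B ∩ s) ∆ (B ∩ t) ∆ (B ∩ u) := by
  ext x
  simp only [mem_inter, mem_symmDiff]
  tauto

theorem mem_iff_eq_of_sdiff_eq_singleton {K C : Finset V} {u x : V} (h : K \ C = {u})
    (hx : x ∉ C) : x ∈ K ↔ x = u := by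
  rw [← mem_singleton, ← h, mem_sdiff]
  tauto

variable {𝒞 : Finset (Finset V)} {B C M : Finset V} {u : V}

theorem IsCover.exists_isMinCover_subset {K : Finset V} (hK : IsCover 𝒞 K) :
    ∃ B ⊆ K, IsMinCover 𝒞 B := by
  obtain ⟨B, hBK, hB, hmin⟩ := exists_minimal_le_of_wellFoundedLT (IsCover 𝒞) K hK
  exact ⟨B, hBK, hB, fun B' hB' hcov => hB'.2 (hmin hcov hB'.1)⟩

theorem IsMinCover.exists_mem_of_mem (hB : IsMinCover 𝒞 B) (hu : u ∈ B) : ∃ C ∈ 𝒞, u ∈ C := by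
  by_contra! h
  refine hB.2 _ (erase_ssubset hu) fun C hC => ?_
  rw [erase_inter, erase_eq_of_notMem fun h' => h C hC (mem_inter.1 h').2]
  exact hB.1 C hC

theorem mem_deletion : C ∈ deletion 𝒞 u ↔ C ∈ 𝒞 ∧ u ∉ C :=
  mem_filter

theorem IsClutter.deletion (h𝒞 : IsClutter 𝒞) (u : V) : IsClutter (deletion 𝒞 u) :=
  fun C hC C' hC' => h𝒞 C (mem_deletion.1 hC).1 C' (mem_deletion.1 hC').1

theorem IsBinary.deletion (hbin : IsBinary 𝒞) (u : V) : IsBinary (deletion 𝒞 u) := by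
  intro C₁ h₁ C₂ h₂ C₃ h₃
  rw [mem_deletion] at h₁ h₂ h₃
  obtain ⟨C, hC, hsub⟩ := hbin C₁ h₁.1 C₂ h₂.1 C₃ h₃.1
  refine ⟨C, mem_deletion.2 ⟨hC, fun hu => ?_⟩, hsub⟩
  have := hsub hu
  simp only [mem_symmDiff] at this
  tauto

theorem IsMinCover.erase_deletion (hB : IsMinCover 𝒞 B) (hu : u ∈ B) :
    IsMinCover (deletion 𝒞 u) (B.erase u) := by
  refine ⟨fun C hC => ?_, fun B' hB' hcov => ?_⟩
  · rw [mem_deletion] at hC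
    rw [erase_inter, erase_eq_of_notMem fun h => hC.2 (mem_inter.1 h).2]
    exact hB.1 C hC.1
  · refine hB.2 (insert u B') (by grind) fun C hC => ?_
    by_cases huC : u ∈ C
    · exact ⟨u, mem_inter.2 ⟨mem_insert_self u B', huC⟩⟩
    · exact (hcov C (mem_deletion.2 ⟨hC, huC⟩)).mono
        (inter_subset_inter_right (subset_insert u B'))

theorem sup_deletion_subset (𝒞 : Finset (Finset V)) (u : V) :
    (deletion 𝒞 u).sup id ⊆ (𝒞.sup id).erase u :=
  Finset.sup_le fun _ hC =>
    subset_erase.2 ⟨le_sup (f := id) (mem_deletion.1 hC).1, (mem_deletion.1 hC).2⟩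

theorem mem_contraction {X : Finset V} :
    X ∈ contraction 𝒞 u ↔ Minimal (· ∈ 𝒞.image (·.erase u)) X := by
  simp only [contraction, mem_filter, and_iff_right_iff_imp]
  exact Minimal.prop

theorem exists_erase_eq_of_mem_contraction {X : Finset V} (hX : X ∈ contraction 𝒞 u) :
    ∃ C ∈ 𝒞, C.erase u = X :=
  mem_image.1 (mem_contraction.1 hX).prop

theorem exists_mem_contraction_subset (hM : M ∈ 𝒞) (u : V) :
    ∃ X ∈ contraction 𝒞 u, X ⊆ M.erase u := by
  obtain ⟨X, hXM, hX⟩ := exists_minimal_le_of_wellFoundedLT (· ∈ 𝒞.image (·.erase u))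
    (M.erase u) (mem_image_of_mem _ hM)
  exact ⟨X, mem_contraction.2 hX, hXM⟩

theorem IsClutter.erase_mem_contraction (h𝒞 : IsClutter 𝒞) (hM : M ∈ 𝒞) (hu : u ∈ M) :
    M.erase u ∈ contraction 𝒞 u := by
  refine mem_contraction.2 ⟨mem_image_of_mem _ hM, fun Y hY hYM => ?_⟩
  obtain ⟨M', hM', rfl⟩ := mem_image.1 hY
  have hM'M : M' ⊆ M := fun x hx =>
    if hxu : x = u then hxu ▸ hu else (mem_erase.1 (hYM (mem_erase.2 ⟨hxu, hx⟩))).2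
  rw [h𝒞 M' hM' M hM hM'M]

theorem isClutter_contraction (𝒞 : Finset (Finset V)) (u : V) :
    IsClutter (contraction 𝒞 u) := fun _ hX _ hY hXY =>
  le_antisymm hXY ((mem_contraction.1 hY).2 (mem_contraction.1 hX).prop hXY)

theorem IsBinary.contraction (hbin : IsBinary 𝒞) (u : V) : IsBinary (contraction 𝒞 u) := by
  intro X₁ h₁ X₂ h₂ X₃ h₃
  obtain ⟨C₁, hC₁, rfl⟩ := exists_erase_eq_of_mem_contraction h₁
  obtain ⟨C₂, hC₂, rfl⟩ := exists_erase_eq_of_mem_contraction h₂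
  obtain ⟨C₃, hC₃, rfl⟩ := exists_erase_eq_of_mem_contraction h₃
  obtain ⟨C, hC, hsub⟩ := hbin C₁ hC₁ C₂ hC₂ C₃ hC₃
  obtain ⟨X, hX, hXC⟩ := exists_mem_contraction_subset hC u
  refine ⟨X, hX, hXC.trans fun x hx => ?_⟩
  rw [mem_erase] at hx
  have := hsub hx.2
  simp only [mem_symmDiff, mem_erase] at this ⊢
  tauto

theorem IsMinCover.contraction (hB : IsMinCover 𝒞 B) (hu : u ∉ B) :
    IsMinCover (contraction 𝒞 u) B := by
  refine ⟨fun X hX => ?_, fun B' hB' hcov => hB.2 B' hB' fun C hC => ?_⟩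
  · obtain ⟨C, hC, rfl⟩ := exists_erase_eq_of_mem_contraction hX
    rw [inter_erase, erase_eq_of_notMem fun h => hu (mem_inter.1 h).1]
    exact hB.1 C hC
  · obtain ⟨X, hX, hXC⟩ := exists_mem_contraction_subset hC u
    exact (hcov X hX).mono (inter_subset_inter_left (hXC.trans (erase_subset u C)))

theorem sup_contraction_subset (𝒞 : Finset (Finset V)) (u : V) :
    (contraction 𝒞 u).sup id ⊆ (𝒞.sup id).erase u :=
  Finset.sup_le fun X hX => by
    obtain ⟨C, hC, rfl⟩ := exists_erase_eq_of_mem_contraction hX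
    exact erase_subset_erase u (le_sup (f := id) hC)

theorem IsClutter.odd_card_inter_of_contraction (h𝒞 : IsClutter 𝒞)
    (hcontr : ∀ X ∈ contraction 𝒞 u, Odd #(B ∩ X)) (hM : M ∈ 𝒞) (huM : u ∈ M) (huB : u ∉ B) :
    Odd #(B ∩ M) := by
  have := hcontr _ (h𝒞.erase_mem_contraction hM huM)
  rwa [inter_erase, erase_eq_of_notMem fun h => huB (mem_inter.1 h).1] at this

theorem IsClutter.exists_sdiff_eq_singleton (h𝒞 : IsClutter 𝒞) (hC : C ∈ 𝒞) (hu : u ∉ C)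
    (h : C ∉ contraction 𝒞 u) : ∃ K ∈ 𝒞, K \ C = {u} := by
  obtain ⟨X, hX, hXC⟩ := exists_mem_contraction_subset hC u
  obtain ⟨K, hK, rfl⟩ := exists_erase_eq_of_mem_contraction hX
  rw [erase_eq_of_notMem hu] at hXC
  have huK : u ∈ K := by
    by_contra huK
    rw [erase_eq_of_notMem huK] at hX hXC
    exact h (h𝒞 K hK C hC hXC ▸ hX)
  refine ⟨K, hK, eq_singleton_iff_unique_mem.2 ⟨mem_sdiff.2 ⟨huK, hu⟩, fun x hx => ?_⟩⟩
  by_contra hxu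
  exact (mem_sdiff.1 hx).2 (hXC (mem_erase.2 ⟨hxu, (mem_sdiff.1 hx).1⟩))

section MemberMinCover

variable {K K' Z : Finset V} {v x : V}

theorem IsBinary.symmDiff_eq_of_subset (h𝒞 : IsClutter 𝒞) (hbin : IsBinary 𝒞) (hC : C ∈ 𝒞)
    {C₁ C₂ C₃ : Finset V} (h₁ : C₁ ∈ 𝒞) (h₂ : C₂ ∈ 𝒞) (h₃ : C₃ ∈ 𝒞) (hsub : C₁ ∆ C₂ ∆ C₃ ⊆ C) :
    C₁ ∆ C₂ ∆ C₃ = C := by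
  obtain ⟨Z, hZ, hZsub⟩ := hbin C₁ h₁ C₂ h₂ C₃ h₃
  obtain rfl := h𝒞 Z hZ C hC (hZsub.trans hsub)
  exact hsub.antisymm hZsub

theorem IsBinary.eq_of_sdiff_eq_singleton (h𝒞 : IsClutter 𝒞) (hbin : IsBinary 𝒞) (hC : C ∈ 𝒞)
    (hK : K ∈ 𝒞) (hK' : K' ∈ 𝒞) (hKu : K \ C = {u}) (hK'u : K' \ C = {u}) : K = K' := by
  have hsub : C ∆ K ∆ K' ⊆ C := fun x hx => by
    by_contra hxC
    have := mem_iff_eq_of_sdiff_eq_singleton hKu hxC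
    have := mem_iff_eq_of_sdiff_eq_singleton hK'u hxC
    simp only [mem_symmDiff] at hx
    tauto
  have heq := hbin.symmDiff_eq_of_subset h𝒞 hC hC hK hK' hsub
  ext x
  have hx : x ∈ C ∆ K ∆ K' ↔ x ∈ C := by rw [heq]
  by_cases hxC : x ∈ C
  · simp only [mem_symmDiff] at hx
    tauto
  · rw [mem_iff_eq_of_sdiff_eq_singleton hKu hxC, mem_iff_eq_of_sdiff_eq_singleton hK'u hxC]

theorem IsBinary.inter_subset_of_subset_symmDiff (h𝒞 : IsClutter 𝒞) (hbin : IsBinary 𝒞)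
    (hC : C ∈ 𝒞) (hK : K ∈ 𝒞) (hKu : K \ C = {u}) (hZ : Z ∈ 𝒞) (hZsub : Z ⊆ C ∆ K ∆ K')
    (hZu : Z \ C ⊆ {u}) : K ∩ C ⊆ K' ∩ C := by
  have hKZ : K ∩ C ⊆ Z := by
    rcases subset_singleton_iff.1 hZu with h | h
    · rw [h𝒞 Z hZ C hC (sdiff_eq_empty_iff_subset.1 h)]
      exact inter_subset_right
    · rw [hbin.eq_of_sdiff_eq_singleton h𝒞 hC hK hZ hKu h]
      exact inter_subset_left
  intro x hx
  have := hZsub (hKZ hx)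
  simp only [mem_symmDiff, mem_inter] at this hx ⊢
  tauto

theorem IsBinary.not_symmDiff_subset_of_even (h𝒞 : IsClutter 𝒞) (hbin : IsBinary 𝒞)
    (hC : C ∈ 𝒞) (heven : Even #C) (hodd : ∀ M ∈ 𝒞, ¬ M ⊆ C → Odd #(C ∩ M))
    {C₁ C₂ C₃ : Finset V} (h₁ : C₁ ∈ 𝒞) (h₂ : C₂ ∈ 𝒞) (h₃ : C₃ ∈ 𝒞) (h₁C : ¬ C₁ ⊆ C)
    (h₂C : ¬ C₂ ⊆ C) (h₃C : ¬ C₃ ⊆ C) : ¬ C₁ ∆ C₂ ∆ C₃ ⊆ C := by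
  intro hsub
  have h := odd_card_symmDiff_symmDiff (hodd C₁ h₁ h₁C) (hodd C₂ h₂ h₂C) (hodd C₃ h₃ h₃C)
  rw [← inter_symmDiff_symmDiff, hbin.symmDiff_eq_of_subset h𝒞 hC h₁ h₂ h₃ hsub, inter_self] at h
  exact Nat.not_even_iff_odd.2 h heven

theorem IsBinary.inter_subset_total (h𝒞 : IsClutter 𝒞) (hbin : IsBinary 𝒞) (hC : C ∈ 𝒞)
    (heven : Even #C) (hodd : ∀ M ∈ 𝒞, ¬ M ⊆ C → Odd #(C ∩ M)) (hK : K ∈ 𝒞) (hK' : K' ∈ 𝒞)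
    (hKu : K \ C = {u}) (hK'v : K' \ C = {v}) : K ∩ C ⊆ K' ∩ C ∨ K' ∩ C ⊆ K ∩ C := by
  by_cases huv : u = v
  · subst huv
    rw [hbin.eq_of_sdiff_eq_singleton h𝒞 hC hK hK' hKu hK'v]
    exact Or.inl subset_rfl
  obtain ⟨Z, hZ, hZsub⟩ := hbin C hC K hK K' hK'
  have hZuv : ∀ x ∈ Z, x ∉ C → x = u ∨ x = v := fun x hxZ hxC => by
    have := hZsub hxZ
    rw [← mem_iff_eq_of_sdiff_eq_singleton hKu hxC, ← mem_iff_eq_of_sdiff_eq_singleton hK'v hxC]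
    simp only [mem_symmDiff] at this
    tauto
  by_cases hvZ : v ∈ Z
  · by_cases huZ : u ∈ Z
    · obtain ⟨huK, huC⟩ := mem_sdiff.1 (hKu ▸ mem_singleton_self u)
      obtain ⟨hvK', hvC⟩ := mem_sdiff.1 (hK'v ▸ mem_singleton_self v)
      refine absurd (fun x hx => ?_) (hbin.not_symmDiff_subset_of_even h𝒞 hC heven hodd hZ hK hK'
        (not_subset.2 ⟨u, huZ, huC⟩) (not_subset.2 ⟨u, huK, huC⟩) (not_subset.2 ⟨v, hvK', hvC⟩))
      -- off `C`, the sets `Z`, `K`, `K'` are `{u, v}`, `{u}`, `{v}`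
      by_contra hxC
      have := mem_iff_eq_of_sdiff_eq_singleton hKu hxC
      have := mem_iff_eq_of_sdiff_eq_singleton hK'v hxC
      have := hZuv x
      simp only [mem_symmDiff] at hx
      grind
    · right
      refine hbin.inter_subset_of_subset_symmDiff h𝒞 hC hK' hK'v hZ
        (by rwa [symmDiff_right_comm]) fun x hx => ?_
      obtain ⟨hxZ, hxC⟩ := mem_sdiff.1 hx
      rcases hZuv x hxZ hxC with rfl | rfl
      · exact absurd hxZ huZ
      · exact mem_singleton_self x
  · left
    refine hbin.inter_subset_of_subset_symmDiff h𝒞 hC hK hKu hZ hZsub fun x hx => ?_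
    obtain ⟨hxZ, hxC⟩ := mem_sdiff.1 hx
    rcases hZuv x hxZ hxC with rfl | rfl
    · exact mem_singleton_self x
    · exact absurd hxZ hvZ

theorem IsBinary.exists_mem_forall_sdiff_eq_singleton (h𝒞 : IsClutter 𝒞) (hbin : IsBinary 𝒞)
    (hC : C ∈ 𝒞) (hcov : IsCover 𝒞 C) (heven : Even #C)
    (hodd : ∀ M ∈ 𝒞, ¬ M ⊆ C → Odd #(C ∩ M)) :
    ∃ x ∈ C, ∀ K ∈ 𝒞, ∀ u, K \ C = {u} → x ∈ K := by
  have mem_killers : ∀ {K u}, K ∈ 𝒞 → K \ C = {u} → K ∈ 𝒞.filter (fun K => #(K \ C) = 1) :=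
    fun hK hKu => mem_filter.2 ⟨hK, by rw [hKu, card_singleton]⟩
  rcases (𝒞.filter (fun K => #(K \ C) = 1)).eq_empty_or_nonempty with hnone | hsome
  · obtain ⟨x, hx⟩ := hcov C hC
    refine ⟨x, (mem_inter.1 hx).1, fun K hK u hKu => ?_⟩
    exact absurd (mem_killers hK hKu) (hnone ▸ notMem_empty K)
  · obtain ⟨K, hKk, hmin⟩ := exists_min_image _ (fun K => #(K ∩ C)) hsome
    obtain ⟨hK, hKc⟩ := mem_filter.1 hKk
    obtain ⟨u, hKu⟩ := card_eq_one.1 hKc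
    obtain ⟨x, hx⟩ := hcov K hK
    rw [inter_comm] at hx
    refine ⟨x, (mem_inter.1 hx).2, fun K' hK' v hK'v => ?_⟩
    rcases hbin.inter_subset_total h𝒞 hC heven hodd hK hK' hKu hK'v with h | h
    · exact (mem_inter.1 (h hx)).1
    · rw [← eq_of_subset_of_card_le h (hmin K' (mem_killers hK' hK'v))] at hx
      exact (mem_inter.1 hx).1

theorem IsBinary.mem_of_forall_sdiff_eq_singleton (h𝒞 : IsClutter 𝒞) (hbin : IsBinary 𝒞)
    (hC : C ∈ 𝒞) (hkill : ∀ u ∈ 𝒞.sup id, u ∉ C → ∃ K ∈ 𝒞, K \ C = {u})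
    (hxC : x ∈ C) (hx : ∀ K ∈ 𝒞, ∀ u, K \ C = {u} → x ∈ K) {Y : Finset V} (hY : Y ∈ 𝒞) :
    x ∈ Y := by
  induction hn : #(Y \ C) using Nat.strong_induction_on generalizing Y with
  | _ n ih =>
  rcases (Y \ C).eq_empty_or_nonempty with hYC | ⟨u, hu⟩
  · rwa [h𝒞 Y hY C hC (sdiff_eq_empty_iff_subset.1 hYC)]
  obtain ⟨huY, huC⟩ := mem_sdiff.1 hu
  obtain ⟨K, hK, hKu⟩ := hkill u (mem_sup.2 ⟨Y, hY, huY⟩) huC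
  obtain ⟨Z, hZ, hZsub⟩ := hbin C hC Y hY K hK
  have hZC : Z \ C ⊆ (Y \ C).erase u := fun z hz => by
    have := mem_iff_eq_of_sdiff_eq_singleton hKu (mem_sdiff.1 hz).2
    have := hZsub (mem_sdiff.1 hz).1
    simp only [mem_symmDiff, mem_sdiff, mem_erase] at this hz ⊢
    grind
  have hxZ := ih _ (hn ▸ card_lt_card (hZC.trans_ssubset (erase_ssubset hu))) hZ rfl
  have := hZsub hxZ
  have := hx K hK u hKu
  simp only [mem_symmDiff] at *
  tauto

theorem IsBinary.odd_card_of_isMinCover (h𝒞 : IsClutter 𝒞) (hbin : IsBinary 𝒞) (hC : C ∈ 𝒞)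
    (hcov : IsMinCover 𝒞 C)
    (hcontr : ∀ u ∈ 𝒞.sup id, u ∉ C → ∀ X ∈ SetFamily.contraction 𝒞 u, Odd #(C ∩ X)) :
    Odd #C := by
  by_contra heven
  rw [Nat.not_odd_iff_even] at heven
  have hodd : ∀ M ∈ 𝒞, ¬ M ⊆ C → Odd #(C ∩ M) := fun M hM hMC => by
    obtain ⟨u, huM, huC⟩ := not_subset.1 hMC
    exact h𝒞.odd_card_inter_of_contraction (hcontr u (mem_sup.2 ⟨M, hM, huM⟩) huC) hM huM huC
  have hkill : ∀ u ∈ 𝒞.sup id, u ∉ C → ∃ K ∈ 𝒞, K \ C = {u} := fun u hu huC =>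
    h𝒞.exists_sdiff_eq_singleton hC huC fun hCu => by
      have := hcontr u hu huC C hCu
      rw [inter_self] at this
      exact Nat.not_even_iff_odd.2 this heven
  obtain ⟨x, hxC, hx⟩ := hbin.exists_mem_forall_sdiff_eq_singleton h𝒞 hC hcov.1 heven hodd
  have hxcov : IsCover 𝒞 {x} := fun M hM =>
    ⟨x, mem_inter.2 ⟨mem_singleton_self x, hbin.mem_of_forall_sdiff_eq_singleton h𝒞 hC hkill hxC hx hM⟩⟩
  have hCx : C = {x} := by
    by_contra hne
    exact hcov.2 {x} (ssubset_of_subset_of_ne (singleton_subset_iff.2 hxC) (Ne.symm hne)) hxcov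
  rw [hCx, card_singleton] at heven
  exact Nat.not_even_one heven

end MemberMinCover

theorem IsBinary.odd_card_inter (h𝒞 : IsClutter 𝒞) (hbin : IsBinary 𝒞) (hB : IsMinCover 𝒞 B)
    (hC : C ∈ 𝒞) : Odd #(B ∩ C) := by
  induction hn : #(𝒞.sup id) using Nat.strong_induction_on generalizing 𝒞 B C with
  | _ n ih =>
  have hcontr : ∀ u ∈ 𝒞.sup id, u ∉ B → ∀ X ∈ SetFamily.contraction 𝒞 u, Odd #(B ∩ X) :=
    fun u hu huB X hX => ih _
      (hn ▸ card_lt_card ((sup_contraction_subset 𝒞 u).trans_ssubset (erase_ssubset hu)))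
      (isClutter_contraction 𝒞 u) (hbin.contraction u) (hB.contraction huB) hX rfl
  by_cases hCB : C ⊆ B
  · by_cases hBC : B ⊆ C
    · obtain rfl := hBC.antisymm hCB
      rw [inter_self]
      exact hbin.odd_card_of_isMinCover h𝒞 hC hB hcontr
    obtain ⟨u, huB, huC⟩ := not_subset.1 hBC
    obtain ⟨M, hM, huM⟩ := hB.exists_mem_of_mem huB
    have hu : u ∈ 𝒞.sup id := mem_sup.2 ⟨M, hM, huM⟩
    have := ih _ (hn ▸ card_lt_card ((sup_deletion_subset 𝒞 u).trans_ssubset (erase_ssubset hu)))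
      (h𝒞.deletion u) (hbin.deletion u) (hB.erase_deletion huB) (mem_deletion.2 ⟨hC, huC⟩) rfl
    rwa [erase_inter, erase_eq_of_notMem fun h => huC (mem_inter.1 h).2] at this
  · obtain ⟨u, huC, huB⟩ := not_subset.1 hCB
    exact h𝒞.odd_card_inter_of_contraction (hcontr u (mem_sup.2 ⟨C, hC, huC⟩) huB) hC huC huB

theorem isBinary_of_odd_card_inter (h : ∀ C ∈ 𝒞, ∀ B, IsMinCover 𝒞 B → Odd #(B ∩ C)) :
    IsBinary 𝒞 := by
  intro C₁ h₁ C₂ h₂ C₃ h₃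
  by_contra! hno
  have hcov : IsCover 𝒞 (𝒞.sup id \ C₁ ∆ C₂ ∆ C₃) := fun C hC => by
    obtain ⟨x, hxC, hxD⟩ := not_subset.1 (hno C hC)
    exact ⟨x, mem_inter.2 ⟨mem_sdiff.2 ⟨mem_sup.2 ⟨C, hC, hxC⟩, hxD⟩, hxC⟩⟩
  obtain ⟨B, hBsub, hB⟩ := hcov.exists_isMinCover_subset
  have hodd := odd_card_symmDiff_symmDiff (h C₁ h₁ B hB) (h C₂ h₂ B hB) (h C₃ h₃ B hB)
  rw [← inter_symmDiff_symmDiff] at hodd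
  obtain ⟨x, hx⟩ := card_pos.1 hodd.pos
  exact (mem_sdiff.1 (hBsub (mem_inter.1 hx).1)).2 (mem_inter.1 hx).2

end SetFamily

theorem binary_clutter_iff_odd_intersection_with_blocker_general
    {V : Type} [DecidableEq V]
    (𝒞 : Finset (Finset V))
    (hclutter : ∀ C ∈ 𝒞, ∀ C' ∈ 𝒞, C ⊆ C' → C = C') :
    (∀ C₁ ∈ 𝒞, ∀ C₂ ∈ 𝒞, ∀ C₃ ∈ 𝒞, ∃ C ∈ 𝒞, C ⊆ symmDiff (symmDiff C₁ C₂) C₃) ↔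
    (∀ C ∈ 𝒞, ∀ B : Finset V,
      ((∀ C' ∈ 𝒞, (B ∩ C').Nonempty) ∧
        ∀ B' ⊂ B, ¬ (∀ C' ∈ 𝒞, (B' ∩ C').Nonempty)) →
      Odd (B ∩ C).card) :=
  ⟨fun hbin _ hC _ hB => SetFamily.IsBinary.odd_card_inter hclutter hbin hB hC,
    fun h => SetFamily.isBinary_of_odd_card_inter fun C hC B hB => h C hC B hB⟩

/-- A clutter `𝒞` (a finite antichain of subsets of a finite ground set `V`)
is binary — the symmetric difference of any three members contains a member — if and only if
`|C ∩ B|` is odd for every member `C ∈ 𝒞` and every minimal cover `B ∈ b(𝒞)`. -/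
theorem binary_clutter_iff_odd_intersection_with_blocker
    {V : Type} [Fintype V] [DecidableEq V]
    (𝒞 : Finset (Finset V))
    (hclutter : ∀ C ∈ 𝒞, ∀ C' ∈ 𝒞, C ⊆ C' → C = C') :
    (∀ C₁ ∈ 𝒞, ∀ C₂ ∈ 𝒞, ∀ C₃ ∈ 𝒞, ∃ C ∈ 𝒞, C ⊆ symmDiff (symmDiff C₁ C₂) C₃) ↔
    (∀ C ∈ 𝒞, ∀ B : Finset V,
      ((∀ C' ∈ 𝒞, (B ∩ C').Nonempty) ∧
        ∀ B' ⊂ B, ¬ (∀ C' ∈ 𝒞, (B' ∩ C').Nonempty)) →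
      Odd (B ∩ C).card) :=
  binary_clutter_iff_odd_intersection_with_blocker_general 𝒞 hclutter
end
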